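/- Let F be a family of Borel functions f : ℝ^s → ℝ with E[f(Y)²] < ∞ for every f ∈ F, and suppose F is dense, with respect to the L² norm of the distribution of Y, in the set 𝔅 = { 1_B : B a Borel subset of ℝ^s } of indicator functions; that is, for every Borel set B there is a sequence f_k ∈ F with E[(1_B(Y) − f_k(Y))²] → 0. Assume the central subspace S_{Y|X} is itself a dimension reduction subspace and, for each f ∈ F, the central mean subspace S_{E[f(Y)|X]} is itself a mean dimension reduction subspace for f. Then F characterizes the central subspace: span{ S_{E[f(Y)|X]} : f ∈ F } = S_{Y|X}. (Theorem 1.) -/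

import Mathlib

/-!
Conditional independence of `Y` and `X` given `σ(P_S ∘ X)` is equivalent to
`E[1_B(Y) | X] = E[1_B(Y) | P_S X]` for every Borel `B`, i.e. `S` is a dimension reduction
subspace iff it is a mean dimension reduction subspace for every indicator. Equality of two
conditional expectations is preserved under `L¹` limits, so it passes from indicators to every
integrable `f(Y)` (via simple functions) and from `F` to the indicators (via density).
Hence `S_{Y|X}` is a mean dimension reduction subspace for each `f ∈ F`, which bounds the span
from above. Conversely, by the tower property the span is a mean dimension reduction subspace
for each `f ∈ F`, hence for every indicator, hence a dimension reduction subspace.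
-/

open MeasureTheory ProbabilityTheory Filter

/-- The map `x ↦ P_S x`, the orthogonal projection onto `S` viewed as a map of the
ambient Euclidean space. -/
noncomputable def projFn {p : ℕ} (S : Submodule ℝ (EuclideanSpace ℝ (Fin p))) :
    EuclideanSpace ℝ (Fin p) → EuclideanSpace ℝ (Fin p) :=
  fun v => (S.orthogonalProjectionOnto v : EuclideanSpace ℝ (Fin p))

/-- The σ-algebra `σ(P_S ∘ X)` generated by the projected random vector. -/
noncomputable def sigmaProj {Ω : Type*} {p : ℕ}
    (S : Submodule ℝ (EuclideanSpace ℝ (Fin p))) (X : Ω → EuclideanSpace ℝ (Fin p)) :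
    MeasurableSpace Ω :=
  MeasurableSpace.comap (fun ω => projFn S (X ω)) inferInstance

lemma sigmaProj_le {Ω : Type*} {p : ℕ} [mΩ : MeasurableSpace Ω]
    (S : Submodule ℝ (EuclideanSpace ℝ (Fin p))) {X : Ω → EuclideanSpace ℝ (Fin p)}
    (hX : Measurable X) : sigmaProj S X ≤ mΩ := by
  have h : Measurable (fun ω => projFn S (X ω)) := by
    have : Measurable (projFn S) :=
      (S.subtypeL.comp (S.orthogonalProjectionOnto)).continuous.measurable
    exact this.comp hX
  exact h.comap_le

/-- `S` is a dimension reduction subspace: `Y ⫫ X | σ(P_S ∘ X)`. -/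
def IsDRS {Ω : Type*} {p s : ℕ} [mΩ : MeasurableSpace Ω] [StandardBorelSpace Ω]
    (P : Measure Ω) [IsFiniteMeasure P]
    (X : Ω → EuclideanSpace ℝ (Fin p)) (Y : Ω → EuclideanSpace ℝ (Fin s))
    (hX : Measurable X) (S : Submodule ℝ (EuclideanSpace ℝ (Fin p))) : Prop :=
  CondIndep (sigmaProj S X) (MeasurableSpace.comap Y inferInstance)
    (MeasurableSpace.comap X inferInstance) (sigmaProj_le S hX) P

/-- The central subspace `S_{Y|X}`: the intersection of all dimension reduction subspaces. -/
noncomputable def centralSubspace {Ω : Type*} {p s : ℕ} [mΩ : MeasurableSpace Ω]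
    [StandardBorelSpace Ω] (P : Measure Ω) [IsFiniteMeasure P]
    (X : Ω → EuclideanSpace ℝ (Fin p)) (Y : Ω → EuclideanSpace ℝ (Fin s))
    (hX : Measurable X) : Submodule ℝ (EuclideanSpace ℝ (Fin p)) :=
  sInf {S | IsDRS P X Y hX S}

/-- `S` is a mean dimension reduction subspace for `f`:
`E[f(Y) | σ(X)] = E[f(Y) | σ(P_S ∘ X)]` a.e. -/
def IsMeanDRS {Ω : Type*} {p s : ℕ} [mΩ : MeasurableSpace Ω] (P : Measure Ω)
    (X : Ω → EuclideanSpace ℝ (Fin p)) (Y : Ω → EuclideanSpace ℝ (Fin s))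
    (f : EuclideanSpace ℝ (Fin s) → ℝ) (S : Submodule ℝ (EuclideanSpace ℝ (Fin p))) : Prop :=
  P[(fun ω => f (Y ω))|MeasurableSpace.comap X inferInstance]
    =ᵐ[P] P[(fun ω => f (Y ω))|sigmaProj S X]

/-- The central mean subspace `S_{E[f(Y)|X]}`: the intersection of all mean dimension
reduction subspaces for `f`. -/
noncomputable def centralMeanSubspace {Ω : Type*} {p s : ℕ} [mΩ : MeasurableSpace Ω]
    (P : Measure Ω) (X : Ω → EuclideanSpace ℝ (Fin p)) (Y : Ω → EuclideanSpace ℝ (Fin s))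
    (f : EuclideanSpace ℝ (Fin s) → ℝ) : Submodule ℝ (EuclideanSpace ℝ (Fin p)) :=
  sInf {S | IsMeanDRS P X Y f S}

open Set Topology

section ConditionalExpectation

variable {Ω : Type*}

lemma indicator_one_mul_eq_indicator (t : Set Ω) (g : Ω → ℝ) :
    t.indicator (fun _ => (1 : ℝ)) * g = t.indicator g := by
  ext ω
  by_cases hω : ω ∈ t <;> simp [hω]

variable {m₁ m₂ : MeasurableSpace Ω} [MeasurableSpace Ω] {μ : Measure Ω}

lemma condExp_ae_eq_condExp_of_tendsto_eLpNorm {u : Ω → ℝ} {v : ℕ → Ω → ℝ}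
    (hu : Integrable u μ) (hv : ∀ k, Integrable (v k) μ)
    (hlim : Tendsto (fun k => eLpNorm (u - v k) 1 μ) atTop (𝓝 0))
    (heq : ∀ k, μ[v k|m₁] =ᵐ[μ] μ[v k|m₂]) :
    μ[u|m₁] =ᵐ[μ] μ[u|m₂] := by
  have hbound : ∀ k, eLpNorm (μ[u|m₁] - μ[u|m₂]) 1 μ ≤ 2 * eLpNorm (u - v k) 1 μ := by
    intro k
    have hdiff : μ[u|m₁] - μ[u|m₂] =ᵐ[μ] μ[u - v k|m₁] - μ[u - v k|m₂] := by
      filter_upwards [condExp_sub hu (hv k) m₁, condExp_sub hu (hv k) m₂, heq k]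
        with ω h₁ h₂ h
      simp only [Pi.sub_apply] at h₁ h₂ ⊢
      rw [h₁, h₂, h]
      ring
    calc eLpNorm (μ[u|m₁] - μ[u|m₂]) 1 μ
        = eLpNorm (μ[u - v k|m₁] - μ[u - v k|m₂]) 1 μ := eLpNorm_congr_ae hdiff
      _ ≤ eLpNorm (μ[u - v k|m₁]) 1 μ + eLpNorm (μ[u - v k|m₂]) 1 μ :=
          eLpNorm_sub_le integrable_condExp.1 integrable_condExp.1 le_rfl
      _ ≤ eLpNorm (u - v k) 1 μ + eLpNorm (u - v k) 1 μ :=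
          add_le_add (eLpNorm_condExp_le_eLpNorm _ le_rfl) (eLpNorm_condExp_le_eLpNorm _ le_rfl)
      _ = 2 * eLpNorm (u - v k) 1 μ := (two_mul _).symm
  have hlim₂ : Tendsto (fun k => 2 * eLpNorm (u - v k) 1 μ) atTop (𝓝 0) := by
    simpa using ENNReal.Tendsto.const_mul hlim (Or.inr ENNReal.ofNat_ne_top)
  have hzero : eLpNorm (μ[u|m₁] - μ[u|m₂]) 1 μ = 0 :=
    le_antisymm (ge_of_tendsto' hlim₂ hbound) bot_le
  filter_upwards [(eLpNorm_eq_zero_iff (integrable_condExp.sub integrable_condExp).1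
    one_ne_zero).mp hzero] with ω hω
  exact sub_eq_zero.mp hω

lemma tendsto_eLpNorm_one_of_tendsto_integral_sq [IsProbabilityMeasure μ] {d : ℕ → Ω → ℝ}
    (hd : ∀ k, MemLp (d k) 2 μ) (hlim : Tendsto (fun k => ∫ ω, d k ω ^ 2 ∂μ) atTop (𝓝 0)) :
    Tendsto (fun k => eLpNorm (d k) 1 μ) atTop (𝓝 0) := by
  have hL2 : Tendsto (fun k => eLpNorm (d k) 2 μ) atTop (𝓝 0) := by
    have hnorm : ∀ k, eLpNorm (d k) 2 μ = ENNReal.ofReal ((∫ ω, d k ω ^ 2 ∂μ) ^ (2⁻¹ : ℝ)) := by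
      intro k
      rw [(hd k).eLpNorm_eq_integral_rpow_norm two_ne_zero ENNReal.ofNat_ne_top]
      simp
    have hcont : Continuous fun x : ℝ => ENNReal.ofReal (x ^ (2⁻¹ : ℝ)) :=
      ENNReal.continuous_ofReal.comp (Real.continuous_rpow_const (by norm_num))
    simp_rw [hnorm]
    have h := (hcont.tendsto 0).comp hlim
    rwa [Real.zero_rpow (by norm_num), ENNReal.ofReal_zero] at h
  exact tendsto_of_tendsto_of_tendsto_of_le_of_le tendsto_const_nhds hL2 (fun _ => bot_le)
    fun k => eLpNorm_le_eLpNorm_of_exponent_le one_le_two (hd k).1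

variable {β : Type*} [MeasurableSpace β] {Y : Ω → β}

lemma condExp_simpleFunc_comp_ae_eq [IsFiniteMeasure μ] (hY : Measurable Y)
    (hind : ∀ B, MeasurableSet B → μ⟦Y ⁻¹' B | m₁⟧ =ᵐ[μ] μ⟦Y ⁻¹' B | m₂⟧) (g : SimpleFunc β ℝ) :
    μ[g ∘ Y|m₁] =ᵐ[μ] μ[g ∘ Y|m₂] := by
  induction g using SimpleFunc.induction with
  | @const c B hB =>
    have hcomp : (SimpleFunc.piecewise B hB (SimpleFunc.const β c) (SimpleFunc.const β 0)) ∘ Y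
        = c • (Y ⁻¹' B).indicator fun _ => (1 : ℝ) := by
      ext ω
      by_cases hω : Y ω ∈ B <;> simp [hω]
    rw [hcomp]
    filter_upwards [condExp_smul c ((Y ⁻¹' B).indicator fun _ => (1 : ℝ)) m₁,
      condExp_smul c ((Y ⁻¹' B).indicator fun _ => (1 : ℝ)) m₂, hind B hB] with ω h₁ h₂ h
    simp only [h₁, h₂, Pi.smul_apply, h]
  | @add g₁ g₂ _ h₁ h₂ =>
    have hint : ∀ g : SimpleFunc β ℝ, Integrable (g ∘ Y) μ :=
      fun g => (g.comp Y hY).integrable_of_isFiniteMeasure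
    rw [SimpleFunc.coe_add, Pi.add_comp]
    filter_upwards [condExp_add (hint g₁) (hint g₂) m₁, condExp_add (hint g₁) (hint g₂) m₂,
      h₁, h₂] with ω e₁ e₂ h₁ h₂
    simp only [e₁, e₂, Pi.add_apply, h₁, h₂]

lemma condExp_comp_ae_eq_of_indicator [IsFiniteMeasure μ] (hY : Measurable Y)
    (hind : ∀ B, MeasurableSet B → μ⟦Y ⁻¹' B | m₁⟧ =ᵐ[μ] μ⟦Y ⁻¹' B | m₂⟧)
    {f : β → ℝ} (hf : Measurable f) (hfY : Integrable (f ∘ Y) μ) :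
    μ[f ∘ Y|m₁] =ᵐ[μ] μ[f ∘ Y|m₂] := by
  set g : ℕ → SimpleFunc β ℝ := SimpleFunc.approxOn f hf (range f ∪ {0}) 0 (by simp)
  have hf_map : Integrable f (μ.map Y) :=
    (integrable_map_measure hf.aestronglyMeasurable hY.aemeasurable).mpr hfY
  have hlim : Tendsto (fun n => eLpNorm (f ∘ Y - g n ∘ Y) 1 μ) atTop (𝓝 0) := by
    have h := SimpleFunc.tendsto_approxOn_range_Lp_eLpNorm ENNReal.one_ne_top hf
      (memLp_one_iff_integrable.mpr hf_map).2
    refine h.congr fun n => ?_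
    rw [eLpNorm_map_measure ((g n).measurable.sub hf).aestronglyMeasurable hY.aemeasurable,
      eLpNorm_sub_comm]
    rfl
  exact condExp_ae_eq_condExp_of_tendsto_eLpNorm hfY
    (fun n => (g n |>.comp Y hY).integrable_of_isFiniteMeasure) hlim
    fun n => condExp_simpleFunc_comp_ae_eq hY hind (g n)

lemma condExp_indicator_mul_ae_eq [IsFiniteMeasure μ] {g : Ω → ℝ}
    (hg : StronglyMeasurable[m₁] g) (hgi : Integrable g μ) {t : Set Ω} (ht : MeasurableSet t) :
    μ[t.indicator (fun _ => (1 : ℝ)) * g|m₁] =ᵐ[μ] μ⟦t | m₁⟧ * g := by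
  have hint : Integrable (t.indicator (fun _ => (1 : ℝ)) * g) μ := by
    rw [indicator_one_mul_eq_indicator]
    exact hgi.indicator ht
  exact condExp_mul_of_stronglyMeasurable_right hg hint ((integrable_const 1).indicator ht)

end ConditionalExpectation

section CondIndep

variable {Ω : Type*} {m' mX mY : MeasurableSpace Ω} [mΩ : MeasurableSpace Ω]
  [StandardBorelSpace Ω] {μ : Measure Ω} [IsFiniteMeasure μ]

lemma condExp_indicator_ae_eq_of_condIndep (hm'X : m' ≤ mX) (hmX : mX ≤ mΩ) (hmY : mY ≤ mΩ)
    (h : CondIndep m' mY mX (hm'X.trans hmX) μ) {A : Set Ω} (hA : MeasurableSet[mY] A) :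
    μ⟦A | mX⟧ =ᵐ[μ] μ⟦A | m'⟧ := by
  have hm' := hm'X.trans hmX
  have hA' : MeasurableSet A := hmY A hA
  refine (ae_eq_condExp_of_forall_setIntegral_eq hmX ((integrable_const 1).indicator hA')
    (fun _ _ _ => integrable_condExp.integrableOn) (fun t ht _ => ?_)
    (stronglyMeasurable_condExp.mono hm'X).aestronglyMeasurable).symm
  have ht' : MeasurableSet t := hmX t ht
  have hprod := (condIndep_iff m' mY mX hm' hmY hmX μ).mp h A t hA ht
  calc ∫ ω in t, (μ⟦A | m'⟧) ω ∂μ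
      = ∫ ω, (t.indicator (fun _ => (1 : ℝ)) * μ⟦A | m'⟧) ω ∂μ := by
        rw [← integral_indicator ht', indicator_one_mul_eq_indicator]
    _ = ∫ ω, (μ⟦t | m'⟧ * μ⟦A | m'⟧) ω ∂μ := by
        rw [← integral_condExp hm']
        exact integral_congr_ae
          (condExp_indicator_mul_ae_eq stronglyMeasurable_condExp integrable_condExp ht')
    _ = ∫ ω, (μ⟦A ∩ t | m'⟧) ω ∂μ := by
        rw [integral_congr_ae hprod, mul_comm]
    _ = ∫ ω in t, A.indicator (fun _ => (1 : ℝ)) ω ∂μ := by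
        rw [integral_condExp hm', ← integral_indicator ht', indicator_indicator, inter_comm]

lemma condIndep_of_condExp_indicator_ae_eq (hm'X : m' ≤ mX) (hmX : mX ≤ mΩ) (hmY : mY ≤ mΩ)
    (h : ∀ A, MeasurableSet[mY] A → μ⟦A | mX⟧ =ᵐ[μ] μ⟦A | m'⟧) :
    CondIndep m' mY mX (hm'X.trans hmX) μ := by
  have hm' := hm'X.trans hmX
  rw [condIndep_iff m' mY mX hm' hmY hmX μ]
  intro A t hA ht
  have hA' : MeasurableSet A := hmY A hA
  have ht' : MeasurableSet t := hmX t ht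
  have h1t_bound : ∀ᵐ ω ∂μ, ‖t.indicator (fun _ => (1 : ℝ)) ω‖ ≤ 1 :=
    ae_of_all μ fun ω => by by_cases hω : ω ∈ t <;> simp [hω]
  calc μ⟦A ∩ t | m'⟧
      = μ[t.indicator (fun _ => (1 : ℝ)) * A.indicator (fun _ => (1 : ℝ))|m'] := by
        rw [inter_comm, show (fun _ : Ω => (1 : ℝ)) = 1 from rfl, inter_indicator_one]
    _ =ᵐ[μ] μ[μ[t.indicator (fun _ => (1 : ℝ)) * A.indicator (fun _ => (1 : ℝ))|mX]|m'] :=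
        (condExp_condExp_of_le hm'X hmX).symm
    _ =ᵐ[μ] μ[t.indicator (fun _ => (1 : ℝ)) * μ⟦A | mX⟧|m'] :=
        condExp_congr_ae (condExp_stronglyMeasurable_mul_of_bound hmX
          (stronglyMeasurable_const.indicator ht) ((integrable_const 1).indicator hA') 1
          h1t_bound)
    _ =ᵐ[μ] μ[t.indicator (fun _ => (1 : ℝ)) * μ⟦A | m'⟧|m'] :=
        condExp_congr_ae (EventuallyEq.rfl.mul (h A hA))
    _ =ᵐ[μ] μ⟦t | m'⟧ * μ⟦A | m'⟧ :=
        condExp_indicator_mul_ae_eq stronglyMeasurable_condExp integrable_condExp ht'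
    _ = μ⟦A | m'⟧ * μ⟦t | m'⟧ := mul_comm _ _

lemma condIndep_iff_condExp_indicator_ae_eq (hm'X : m' ≤ mX) (hmX : mX ≤ mΩ) (hmY : mY ≤ mΩ) :
    CondIndep m' mY mX (hm'X.trans hmX) μ ↔
      ∀ A, MeasurableSet[mY] A → μ⟦A | mX⟧ =ᵐ[μ] μ⟦A | m'⟧ :=
  ⟨fun h _ hA => condExp_indicator_ae_eq_of_condIndep hm'X hmX hmY h hA,
    condIndep_of_condExp_indicator_ae_eq hm'X hmX hmY⟩

end CondIndep

section DimensionReduction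

variable {Ω : Type*} {p s : ℕ} {S T : Submodule ℝ (EuclideanSpace ℝ (Fin p))}

lemma projFn_eq_starProjection (S : Submodule ℝ (EuclideanSpace ℝ (Fin p))) :
    projFn S = S.starProjection :=
  rfl

lemma measurable_projFn (S : Submodule ℝ (EuclideanSpace ℝ (Fin p))) : Measurable (projFn S) :=
  S.starProjection.continuous.measurable

lemma projFn_comp_projFn_of_le (h : S ≤ T) : projFn S ∘ projFn T = projFn S := by
  simp only [projFn_eq_starProjection, ← ContinuousLinearMap.coe_comp,
    Submodule.starProjection_comp_starProjection_of_le h]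

lemma sigmaProj_le_comap (S : Submodule ℝ (EuclideanSpace ℝ (Fin p)))
    (X : Ω → EuclideanSpace ℝ (Fin p)) :
    sigmaProj S X ≤ MeasurableSpace.comap X inferInstance := by
  rw [sigmaProj, ← Function.comp_def, ← MeasurableSpace.comap_comp]
  exact MeasurableSpace.comap_mono (measurable_projFn S).comap_le

lemma sigmaProj_mono (h : S ≤ T) (X : Ω → EuclideanSpace ℝ (Fin p)) :
    sigmaProj S X ≤ sigmaProj T X := by
  rw [sigmaProj, ← Function.comp_def, ← projFn_comp_projFn_of_le h, Function.comp_assoc,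
    ← MeasurableSpace.comap_comp]
  exact MeasurableSpace.comap_mono (measurable_projFn S).comap_le

variable [MeasurableSpace Ω] {P : Measure Ω}
  {X : Ω → EuclideanSpace ℝ (Fin p)} {Y : Ω → EuclideanSpace ℝ (Fin s)}
  {f : EuclideanSpace ℝ (Fin s) → ℝ}

lemma IsMeanDRS.mono [IsFiniteMeasure P] (hX : Measurable X) (h : IsMeanDRS P X Y f S)
    (hST : S ≤ T) : IsMeanDRS P X Y f T := by
  have hmX : MeasurableSpace.comap X inferInstance ≤ ‹MeasurableSpace Ω› := hX.comap_le
  have hS_meas : StronglyMeasurable[sigmaProj T X] (P[fun ω => f (Y ω)|sigmaProj S X]) :=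
    stronglyMeasurable_condExp.mono (sigmaProj_mono hST X)
  rw [IsMeanDRS]
  symm
  calc P[fun ω => f (Y ω)|sigmaProj T X]
      =ᵐ[P] P[P[fun ω => f (Y ω)|MeasurableSpace.comap X inferInstance]|sigmaProj T X] :=
        (condExp_condExp_of_le (sigmaProj_le_comap T X) hmX).symm
    _ =ᵐ[P] P[P[fun ω => f (Y ω)|sigmaProj S X]|sigmaProj T X] := condExp_congr_ae h
    _ = P[fun ω => f (Y ω)|sigmaProj S X] :=
        condExp_of_stronglyMeasurable (sigmaProj_le T hX) hS_meas integrable_condExp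
    _ =ᵐ[P] P[fun ω => f (Y ω)|MeasurableSpace.comap X inferInstance] := h.symm

lemma IsMeanDRS.of_tendsto_integral_sq [IsProbabilityMeasure P]
    {g : ℕ → EuclideanSpace ℝ (Fin s) → ℝ} (hf : MemLp (fun ω => f (Y ω)) 2 P)
    (hg : ∀ k, MemLp (fun ω => g k (Y ω)) 2 P)
    (hlim : Tendsto (fun k => ∫ ω, (f (Y ω) - g k (Y ω)) ^ 2 ∂P) atTop (𝓝 0))
    (h : ∀ k, IsMeanDRS P X Y (g k) S) : IsMeanDRS P X Y f S :=
  condExp_ae_eq_condExp_of_tendsto_eLpNorm (hf.integrable one_le_two)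
    (fun k => (hg k).integrable one_le_two)
    (tendsto_eLpNorm_one_of_tendsto_integral_sq (fun k => hf.sub (hg k)) hlim) h

lemma isDRS_iff_forall_isMeanDRS_indicator [StandardBorelSpace Ω] [IsFiniteMeasure P]
    (hX : Measurable X) (hY : Measurable Y) :
    IsDRS P X Y hX S ↔ ∀ B, MeasurableSet B → IsMeanDRS P X Y (B.indicator fun _ => 1) S := by
  rw [IsDRS, condIndep_iff_condExp_indicator_ae_eq (sigmaProj_le_comap S X) hX.comap_le
    hY.comap_le]
  exact ⟨fun h B hB => h _ ⟨B, hB, rfl⟩, by rintro h _ ⟨B, hB, rfl⟩; exact h B hB⟩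

lemma IsDRS.isMeanDRS [StandardBorelSpace Ω] [IsFiniteMeasure P] {hX : Measurable X}
    (hY : Measurable Y) (h : IsDRS P X Y hX S) (hf : Measurable f)
    (hfY : Integrable (fun ω => f (Y ω)) P) : IsMeanDRS P X Y f S :=
  condExp_comp_ae_eq_of_indicator hY ((isDRS_iff_forall_isMeanDRS_indicator hX hY).mp h) hf hfY

end DimensionReduction

/-- Theorem 1: if `F ⊆ L²(F_Y)` is dense (in `L²` of the distribution of `Y`) in the class of
indicator functions of Borel sets, then `F` characterizes the central subspace:
`span{ S_{E[f(Y)|X]} : f ∈ F } = S_{Y|X}`. -/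
theorem characterizes_centralSubspace_of_dense
    {Ω : Type*} {p s : ℕ} [mΩ : MeasurableSpace Ω] [StandardBorelSpace Ω]
    (P : Measure Ω) [IsProbabilityMeasure P]
    (X : Ω → EuclideanSpace ℝ (Fin p)) (Y : Ω → EuclideanSpace ℝ (Fin s))
    (hX : Measurable X) (hY : Measurable Y)
    (F : Set (EuclideanSpace ℝ (Fin s) → ℝ))
    (hFmeas : ∀ f ∈ F, Measurable f)
    (hFL2 : ∀ f ∈ F, MemLp (fun ω => f (Y ω)) 2 P)
    (hdense : ∀ B : Set (EuclideanSpace ℝ (Fin s)), MeasurableSet B →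
      ∃ g : ℕ → (EuclideanSpace ℝ (Fin s) → ℝ), (∀ k, g k ∈ F) ∧
        Filter.Tendsto
          (fun k => ∫ ω, (B.indicator (fun _ => (1 : ℝ)) (Y ω) - g k (Y ω)) ^ 2 ∂P)
          Filter.atTop (nhds 0))
    (hcentral : IsDRS P X Y hX (centralSubspace P X Y hX))
    (hmean : ∀ f ∈ F, IsMeanDRS P X Y f (centralMeanSubspace P X Y f)) :
    (⨆ f ∈ F, centralMeanSubspace P X Y f) = centralSubspace P X Y hX := by
  refine le_antisymm (iSup₂_le fun f hf => sInf_le ?_) (sInf_le ?_)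
  · exact hcentral.isMeanDRS hY (hFmeas f hf) ((hFL2 f hf).integrable one_le_two)
  · refine (isDRS_iff_forall_isMeanDRS_indicator hX hY).mpr fun B hB => ?_
    obtain ⟨g, hgF, hlim⟩ := hdense B hB
    have hB_L2 : MemLp (fun ω => B.indicator (fun _ => (1 : ℝ)) (Y ω)) 2 P :=
      (memLp_const 1).indicator (hY hB)
    exact IsMeanDRS.of_tendsto_integral_sq hB_L2 (fun k => hFL2 _ (hgF k)) hlim
      fun k => (hmean _ (hgF k)).mono hX (le_biSup _ (hgF k))
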